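/- Optimality of the harmonic flow: for the Markov chain Y associated with the harmonic flow Φ_AB one has τ_B^Y < ∞ P^{Φ_AB}-almost surely, the stopped paths (Y_0,…,Y_{τ_B^Y}) are self-avoiding almost surely, and equality holds in the Berman-Konsowa bound: E^{Φ_AB}[ ( Σ_{n=1}^{τ_B^Y} (dΦ_AB/dK)(Y_{n−1},Y_n) )^{-1} ] = Cap(A,B). -/

import Mathlib

open MeasureTheory ProbabilityTheory ENNReal Set Filter
open scoped Classical

noncomputable section

variable {Ω : Type*}

/-- The Dirichlet form `E(h) = (1/2) ∫ (h(y)-h(x))² K(dx,dy)` (in `ℝ≥0∞`). -/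
def dirichletForm [MeasurableSpace Ω] (K : Measure (Ω × Ω)) (h : Ω → ℝ) : ℝ≥0∞ :=
  2⁻¹ * ∫⁻ p, ENNReal.ofReal ((h p.2 - h p.1) ^ 2) ∂K

/-- The class `V_AB` of test potentials. -/
def VAB [MeasurableSpace Ω] (A B : Set Ω) (K : Measure (Ω × Ω)) : Set (Ω → ℝ) :=
  {h | Measurable h ∧ (∀ x ∈ A, h x = 1) ∧ (∀ x ∈ B, h x = 0) ∧
    (∀ x, 0 ≤ h x ∧ h x ≤ 1) ∧ dirichletForm K h < ⊤}

/-- The capacity `Cap(A,B)`, defined by the Dirichlet principle. -/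
def Cap [MeasurableSpace Ω] (A B : Set Ω) (K : Measure (Ω × Ω)) : ℝ≥0∞ :=
  ⨅ h ∈ VAB A B K, dirichletForm K h

/-- Finite paths `(γ₀, …, γ_{n+1})` with at least one edge. -/
abbrev PathSpace (Ω : Type*) := Σ n : ℕ, Fin (n + 2) → Ω

/-- The set `Γ_AB` of finite paths from `A` to `B` not touching `B` before the end. -/
def GammaAB (A B : Set Ω) : Set (PathSpace Ω) :=
  {γ | γ.2 0 ∈ A ∧ γ.2 (Fin.last (γ.1 + 1)) ∈ B ∧
    ∀ i : Fin (γ.1 + 2), 0 < (i : ℕ) → (i : ℕ) < γ.1 + 1 → γ.2 i ∉ B}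

/-- Sum of `g` over the (directed) edges of the path `γ`. -/
def pathSum (g : Ω × Ω → ℝ≥0∞) (γ : PathSpace Ω) : ℝ≥0∞ :=
  ∑ j : Fin (γ.1 + 1), g (γ.2 j.castSucc, γ.2 j.succ)

/-- `Φ` is the edge measure `Φ_P` of the path measure `P`. -/
def IsEdgeMeasure [MeasurableSpace Ω] (P : Measure (PathSpace Ω)) (Φ : Measure (Ω × Ω)) : Prop :=
  ∀ g : Ω × Ω → ℝ≥0∞, Measurable g → ∫⁻ p, g p ∂Φ = ∫⁻ γ, pathSum g γ ∂P

/-- `Φ` is a unit flow from `A` to `B`. -/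
def IsUnitFlow [MeasurableSpace Ω] (A B : Set Ω) (Φ : Measure (Ω × Ω)) : Prop :=
  SigmaFinite Φ ∧
  Φ (A ×ˢ univ) = 1 ∧ Φ (univ ×ˢ A) = 0 ∧
  Φ (univ ×ˢ B) = 1 ∧ Φ (B ×ˢ univ) = 0 ∧
  (∀ C : Set Ω, MeasurableSet C → C ⊆ (A ∪ B)ᶜ → Φ (C ×ˢ univ) = Φ (univ ×ˢ C)) ∧
  ∃ χ : Set (Ω × Ω), MeasurableSet χ ∧ Φ χᶜ = 0 ∧ ∀ x y : Ω, (x, y) ∈ χ → (y, x) ∉ χ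

/-- `χ` contains no loops. -/
def NoLoops (χ : Set (Ω × Ω)) : Prop :=
  ∀ (n : ℕ) (γ : Fin (n + 2) → Ω), γ (Fin.last (n + 1)) = γ 0 →
    ∃ j : Fin (n + 1), (γ j.castSucc, γ j.succ) ∉ χ

/-- `Φ` is a loop-free unit flow from `A` to `B`. -/
def IsLoopFreeUnitFlow [MeasurableSpace Ω] (A B : Set Ω) (Φ : Measure (Ω × Ω)) : Prop :=
  IsUnitFlow A B Φ ∧
  ∃ χ : Set (Ω × Ω), MeasurableSet χ ∧ Φ χᶜ = 0 ∧
    (∀ x y : Ω, (x, y) ∈ χ → (y, x) ∉ χ) ∧ NoLoops χ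

/-- `Φ(dx,dy) = ν(dx) ℓ(x,dy)` with `ν = Φ.fst` the left marginal. -/
def Disintegrates [MeasurableSpace Ω] (Φ : Measure (Ω × Ω)) (ℓ : Kernel Ω Ω) : Prop :=
  ∀ g : Ω × Ω → ℝ≥0∞, Measurable g →
    ∫⁻ p, g p ∂Φ = ∫⁻ x, ∫⁻ y, g (x, y) ∂(ℓ x) ∂Φ.fst

/-- Finite-dimensional distributions of the Markov chain with initial law `μ0` and kernel `ℓ`. -/
def fdd [MeasurableSpace Ω] (μ0 : Measure Ω) (ℓ : Kernel Ω Ω) :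
    (n : ℕ) → Measure (Fin (n + 1) → Ω)
  | 0 => μ0.map (fun x => fun _ => x)
  | n + 1 => (fdd μ0 ℓ n).bind (fun p => (ℓ (p (Fin.last n))).map (Fin.snoc p))

/-- `P` is the law of the Markov chain with initial law `μ0` and transition kernel `ℓ`. -/
def IsChainLaw [MeasurableSpace Ω] (μ0 : Measure Ω) (ℓ : Kernel Ω Ω)
    (P : Measure (ℕ → Ω)) : Prop :=
  IsProbabilityMeasure P ∧
  ∀ n : ℕ, P.map (fun ω (i : Fin (n + 1)) => ω (i : ℕ)) = fdd μ0 ℓ n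

/-- `Σ_{n=1}^{τ_B} g(Y_{n-1}, Y_n)`, where `τ_B = min{n ≥ 1 : Y_n ∈ B}`. -/
def stoppedSum (B : Set Ω) (g : Ω × Ω → ℝ≥0∞) (ω : ℕ → Ω) : ℝ≥0∞ :=
  ∑' n : ℕ, if ∀ m, 1 ≤ m → m ≤ n → ω m ∉ B then g (ω n, ω (n + 1)) else 0

/-- The event `τ_B < ∞`. -/
def HitsB (B : Set Ω) (ω : ℕ → Ω) : Prop := ∃ n : ℕ, 1 ≤ n ∧ ω n ∈ B

/-- `τ_B`, viewed in `ℝ≥0∞`. -/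
def hitTimeE (B : Set Ω) (ω : ℕ → Ω) : ℝ≥0∞ :=
  ∑' n : ℕ, if ∀ m, 1 ≤ m → m ≤ n → ω m ∉ B then 1 else 0

/-- The Berman-Konsowa functional `E^Φ[ (Σ_{n=1}^{τ_B} g(Y_{n-1},Y_n))⁻¹ ]`, with the
reciprocal taken to be `0` on `{τ_B = ∞}` (and automatically `0` when the sum is infinite). -/
def bkValue [MeasurableSpace Ω] (B : Set Ω) (g : Ω × Ω → ℝ≥0∞)
    (P : Measure (ℕ → Ω)) : ℝ≥0∞ :=
  ∫⁻ ω, (if HitsB B ω then (stoppedSum B g ω)⁻¹ else 0) ∂P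

end

/-- Minus the generator: `(-Lh)(x) = ∫ (h(x) - h(y)) k(x,dy)`. -/
noncomputable def negL {Ω : Type*} [MeasurableSpace Ω] (k : Kernel Ω Ω) (h : Ω → ℝ) (x : Ω) : ℝ :=
  ∫ y, (h x - h y) ∂(k x)

/-- The harmonic flow `Φ_AB(dx,dy) = c⁻¹ [h(x) - h(y)]₊ K(dx,dy)` (with `c = Cap(A,B)`). -/
noncomputable def harmonicFlow {Ω : Type*} [MeasurableSpace Ω] (K : Measure (Ω × Ω))
    (c : ℝ≥0∞) (h : Ω → ℝ) : Measure (Ω × Ω) :=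
  K.withDensity fun p => c⁻¹ * ENNReal.ofReal (h p.1 - h p.2)

/-!
Along `Φ_AB`-almost every edge `h_AB` strictly decreases and `dΦ_AB/dK = Cap⁻¹ (h_AB(x) - h_AB(y))`.
A path of the chain from `A` to `B` therefore has strictly decreasing potential (so it is
self-avoiding), and its Berman-Konsowa sum telescopes to `Cap⁻¹ (h_AB(Y_0) - h_AB(Y_τ)) = Cap⁻¹`.

That `τ_B < ∞` almost surely is a Lyapunov argument. Harmonicity of `h_AB` off `A ∪ B` makes the
flow conserved there, so the law of the chain killed on entering `B` stays below the left
marginal `ν` of `Φ_AB`. Under `ν` every step lowers the potential `h_AB ∈ [0, 1]` by a strictly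
positive expected amount, so the total expected decrease is finite, the killed mass tends to `0`,
and it is the probability of never reaching `B`.
-/

open Topology

namespace ProbabilityTheory.Kernel

variable {α β : Type*} [MeasurableSpace α] [MeasurableSpace β]

lemma isSFiniteKernel_of_forall_lt_top (κ : Kernel α β) (hκ : ∀ a, κ a univ < ∞) :
    IsSFiniteKernel κ := by
  set F : α → ℕ := fun a => ⌊(κ a univ).toReal⌋₊
  have hF : Measurable F := (κ.measurable_coe .univ).ennreal_toReal.nat_floor
  refine ⟨⟨fun n => piecewise (hF (measurableSet_singleton n)) κ 0,
    fun n => ⟨⟨n + 1, by simp, fun a => ?_⟩⟩, ?_⟩⟩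
  · by_cases ha : F a = n
    · simp only [piecewise_apply, Set.mem_preimage, Set.mem_singleton_iff, ha, if_true]
      rw [← ENNReal.ofReal_toReal (hκ a).ne, ← ha]
      exact ENNReal.ofReal_le_of_le_toReal (by exact_mod_cast (Nat.lt_floor_add_one _).le)
    · simp [piecewise_apply, ha]
  · ext a s hs
    simp only [sum_apply' _ _ hs, piecewise_apply', Set.mem_preimage, Set.mem_singleton_iff]
    simp [eq_comm (a := F a)]

end ProbabilityTheory.Kernel

section Measures

variable {α β : Type*} [MeasurableSpace α] [MeasurableSpace β]

lemma lintegral_ofReal_eq_lintegral_ofReal_neg {μ : Measure α} {f : α → ℝ} (hf : Integrable f μ)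
    (h0 : ∫ x, f x ∂μ = 0) :
    ∫⁻ x, ENNReal.ofReal (f x) ∂μ = ∫⁻ x, ENNReal.ofReal (-f x) ∂μ := by
  have h := integral_eq_lintegral_pos_part_sub_lintegral_neg_part hf
  have hneg : ∫⁻ x, ENNReal.ofReal (-f x) ∂μ < ∞ := hf.neg.lintegral_lt_top
  exact (ENNReal.toReal_eq_toReal_iff' hf.lintegral_lt_top.ne hneg.ne).1 (by linarith)

lemma setLIntegral_univ_prod_of_map_swap {K : Measure (α × α)} (hK : K.map Prod.swap = K)
    {F : α × α → ℝ≥0∞} (hF : Measurable F) {C : Set α} (hC : MeasurableSet C) :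
    ∫⁻ p in univ ×ˢ C, F p ∂K = ∫⁻ p in C ×ˢ univ, F p.swap ∂K := by
  conv_lhs => rw [← hK]
  rw [setLIntegral_map (MeasurableSet.univ.prod hC) hF measurable_swap, preimage_swap_prod]

namespace MeasureTheory.Measure

lemma eq_compProd_of_apply_prod {μ : Measure α} [SFinite μ] {κ : Kernel α β}
    [IsSFiniteKernel κ] {K : Measure (α × β)} [IsFiniteMeasure K]
    (hK : ∀ C D, MeasurableSet C → MeasurableSet D → K (C ×ˢ D) = ∫⁻ x in C, κ x D ∂μ) :
    K = μ ⊗ₘ κ :=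
  Measure.ext_prod fun hC hD => by rw [hK _ _ hC hD, Measure.compProd_apply_prod hC hD]

lemma map_swap_eq_self_of_apply_prod {K : Measure (α × α)} [IsFiniteMeasure K]
    (hK : ∀ C D, MeasurableSet C → MeasurableSet D → K (C ×ˢ D) = K (D ×ˢ C)) :
    K.map Prod.swap = K :=
  Measure.ext_prod fun hC hD => by
    rw [Measure.map_apply measurable_swap (hC.prod hD), preimage_swap_prod, hK _ _ hD hC]

lemma fst_withDensity_apply (K : Measure (α × β)) (F : α × β → ℝ≥0∞) {C : Set α}
    (hC : MeasurableSet C) : (K.withDensity F).fst C = ∫⁻ p in C ×ˢ univ, F p ∂K := by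
  rw [Measure.fst_apply hC, ← prod_univ, withDensity_apply _ (hC.prod .univ)]

lemma snd_withDensity_apply (K : Measure (α × β)) (F : α × β → ℝ≥0∞) {D : Set β}
    (hD : MeasurableSet D) : (K.withDensity F).snd D = ∫⁻ p in univ ×ˢ D, F p ∂K := by
  rw [Measure.snd_apply hD, ← univ_prod, withDensity_apply _ (MeasurableSet.univ.prod hD)]

end MeasureTheory.Measure

end Measures

section HarmonicFlow

variable {Ω : Type*} [MeasurableSpace Ω] {K : Measure (Ω × Ω)} {c : ℝ≥0∞} {h : Ω → ℝ}

lemma measurable_ofReal_sub (hh : Measurable h) :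
    Measurable fun p : Ω × Ω => ENNReal.ofReal (h p.1 - h p.2) :=
  ((hh.comp measurable_fst).sub (hh.comp measurable_snd)).ennreal_ofReal

lemma ae_harmonicFlow_lt (hh : Measurable h) : ∀ᵐ p ∂harmonicFlow K c h, h p.2 < h p.1 := by
  have hS : MeasurableSet {p : Ω × Ω | ¬h p.2 < h p.1} :=
    (measurableSet_lt (hh.comp measurable_snd) (hh.comp measurable_fst)).compl
  rw [ae_iff, harmonicFlow, withDensity_apply _ hS]
  refine (setLIntegral_congr_fun hS fun p hp => ?_).trans lintegral_zero
  simp [ENNReal.ofReal_eq_zero.2 (sub_nonpos.2 (not_lt.1 hp))]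

lemma harmonicFlow_snd_eq_zero (hh : Measurable h) (h1 : ∀ x, h x ≤ 1) {A : Set Ω}
    (hA : MeasurableSet A) (hA1 : ∀ x ∈ A, h x = 1) : (harmonicFlow K c h).snd A = 0 := by
  rw [Measure.snd_apply hA]
  refine measure_mono_null (fun p hp => ?_) (ae_iff.1 (ae_harmonicFlow_lt hh))
  simpa [hA1 _ hp] using h1 p.1

lemma ae_rnDeriv_harmonicFlow [SigmaFinite K] (hh : Measurable h) :
    ∀ᵐ p ∂harmonicFlow K c h,
      (harmonicFlow K c h).rnDeriv K p = c⁻¹ * ENNReal.ofReal (h p.1 - h p.2) :=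
  (withDensity_absolutelyContinuous K _).ae_le
    (Measure.rnDeriv_withDensity K (measurable_const.mul (measurable_ofReal_sub hh)))

lemma isFiniteMeasure_harmonicFlow [IsFiniteMeasure K] (hc : c ≠ 0)
    (h01 : ∀ x, 0 ≤ h x ∧ h x ≤ 1) : IsFiniteMeasure (harmonicFlow K c h) := by
  refine ⟨?_⟩
  rw [harmonicFlow, withDensity_apply _ .univ, Measure.restrict_univ]
  calc ∫⁻ p, c⁻¹ * ENNReal.ofReal (h p.1 - h p.2) ∂K ≤ ∫⁻ _, c⁻¹ ∂K :=
        lintegral_mono fun p => mul_le_of_le_one_right' (ENNReal.ofReal_le_one.2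
          (by linarith [(h01 p.1).2, (h01 p.2).1]))
    _ < ∞ := by
      rw [lintegral_const]
      exact ENNReal.mul_lt_top (ENNReal.inv_lt_top.2 (pos_iff_ne_zero.2 hc)) (measure_lt_top _ _)

lemma harmonicFlow_fst_eq_snd {μ : Measure Ω} [SFinite μ] {k : Kernel Ω Ω} [IsSFiniteKernel k]
    (hk : ∀ x, k x univ < ∞) (hKμ : K = μ ⊗ₘ k) (hKswap : K.map Prod.swap = K)
    (hh : Measurable h) (h01 : ∀ x, 0 ≤ h x ∧ h x ≤ 1) {C : Set Ω} (hC : MeasurableSet C)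
    (hharm : ∀ᵐ x ∂μ.restrict C, negL k h x = 0) :
    (harmonicFlow K c h).fst C = (harmonicFlow K c h).snd C := by
  have hF : Measurable fun p : Ω × Ω => c⁻¹ * ENNReal.ofReal (h p.1 - h p.2) :=
    measurable_const.mul (measurable_ofReal_sub hh)
  rw [harmonicFlow, Measure.fst_withDensity_apply _ _ hC, Measure.snd_withDensity_apply _ _ hC,
    setLIntegral_univ_prod_of_map_swap hKswap hF hC, hKμ, Measure.setLIntegral_compProd hF hC .univ,
    Measure.setLIntegral_compProd (f := fun p => c⁻¹ * ENNReal.ofReal (h p.swap.1 - h p.swap.2))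
      (hF.comp measurable_swap) hC .univ]
  -- By the symmetry of `K` both sides are now integrals over `C × Ω`, of `[h x - h y]₊` and of
  -- `[h y - h x]₊`; harmonicity at `x` says that these have the same `k x`-integral.
  refine lintegral_congr_ae ?_
  filter_upwards [hharm] with x hx
  have : IsFiniteMeasure (k x) := ⟨hk x⟩
  have hint : Integrable (fun y => h x - h y) (k x) :=
    Integrable.of_bound (measurable_const.sub hh).aestronglyMeasurable 1
      (.of_forall fun y => by
        rw [Real.norm_eq_abs, abs_le]; constructor <;> linarith [h01 x, h01 y])
  simp only [Measure.restrict_univ, Prod.swap_prod_mk]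
  rw [lintegral_const_mul _ (f := fun y => ENNReal.ofReal (h x - h y))
      (measurable_const.sub hh).ennreal_ofReal,
    lintegral_const_mul _ (f := fun y => ENNReal.ofReal (h y - h x))
      (hh.sub measurable_const).ennreal_ofReal,
    lintegral_ofReal_eq_lintegral_ofReal_neg hint hx]
  simp only [neg_sub]

end HarmonicFlow

section Chain

variable {Ω : Type*} [MeasurableSpace Ω]

lemma measurable_snoc (n : ℕ) :
    Measurable fun r : (Fin (n + 1) → Ω) × Ω => (Fin.snoc r.1 r.2 : Fin (n + 2) → Ω) :=
  measurable_pi_iff.2 fun i => Fin.lastCases (by simpa using measurable_snd)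
    (fun j => by simpa [Function.comp_def] using (measurable_pi_apply j).comp measurable_fst) i

lemma measurable_snoc_right {n : ℕ} (q : Fin (n + 1) → Ω) :
    Measurable fun y : Ω => (Fin.snoc q y : Fin (n + 2) → Ω) :=
  (measurable_snoc n).comp measurable_prodMk_left

lemma measurable_map_snoc (ℓ : Kernel Ω Ω) [IsSFiniteKernel ℓ] (n : ℕ) :
    Measurable fun q : Fin (n + 1) → Ω =>
      (ℓ (q (Fin.last n))).map fun y => (Fin.snoc q y : Fin (n + 2) → Ω) := by
  refine Measure.measurable_of_measurable_coe _ fun T hT => ?_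
  simp_rw [Measure.map_apply (measurable_snoc_right _) hT]
  exact (ℓ.comap _ (measurable_pi_apply _)).measurable_kernel_prodMk_left (measurable_snoc n hT)

lemma fdd_succ_apply (μ0 : Measure Ω) (ℓ : Kernel Ω Ω) [IsSFiniteKernel ℓ] (n : ℕ)
    {S : Set ((Fin (n + 1) → Ω) × Ω)} (hS : MeasurableSet S) :
    fdd μ0 ℓ (n + 1) {p | (Fin.init p, p (Fin.last (n + 1))) ∈ S} =
      ∫⁻ q, ℓ (q (Fin.last n)) (Prod.mk q ⁻¹' S) ∂(fdd μ0 ℓ n) := by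
  have hS' : MeasurableSet {p : Fin (n + 2) → Ω | (Fin.init p, p (Fin.last (n + 1))) ∈ S} :=
    ((measurable_pi_lambda _ fun i => measurable_pi_apply i.castSucc).prodMk
      (measurable_pi_apply _)) hS
  rw [fdd, Measure.bind_apply hS' (measurable_map_snoc ℓ n).aemeasurable]
  refine lintegral_congr fun q => ?_
  rw [Measure.map_apply (measurable_snoc_right q) hS']
  simp [Set.preimage, Fin.init_snoc]

end Chain

section Avoids

variable {Ω : Type*} {B : Set Ω}

def avoidsUpTo (B : Set Ω) (n : ℕ) : Set (ℕ → Ω) := {ω | ∀ m, 1 ≤ m → m ≤ n → ω m ∉ B}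

def finAvoids (B : Set Ω) (n : ℕ) : Set (Fin (n + 1) → Ω) :=
  {q | ∀ i : Fin (n + 1), 1 ≤ (i : ℕ) → q i ∉ B}

lemma preimage_finAvoids (B : Set Ω) (n : ℕ) :
    (fun (ω : ℕ → Ω) (i : Fin (n + 1)) => ω i) ⁻¹' finAvoids B n = avoidsUpTo B n := by
  ext ω
  exact ⟨fun h m h1 h2 => h ⟨m, by omega⟩ h1, fun h i h1 => h i h1 (by omega)⟩

lemma finAvoids_zero (B : Set Ω) : finAvoids B 0 = univ :=
  eq_univ_of_forall fun q i hi => absurd i.isLt (by omega)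

lemma mem_finAvoids_succ {n : ℕ} {q : Fin (n + 2) → Ω} :
    q ∈ finAvoids B (n + 1) ↔ Fin.init q ∈ finAvoids B n ∧ q (Fin.last (n + 1)) ∉ B :=
  ⟨fun h => ⟨fun i hi => h i.castSucc hi, h _ (by simp)⟩,
    fun h i => Fin.lastCases (fun _ => h.2) (fun j hj => h.1 j hj) i⟩

lemma iInter_avoidsUpTo (B : Set Ω) : ⋂ n, avoidsUpTo B n = {ω | ¬HitsB B ω} := by
  ext ω
  simp only [mem_iInter, avoidsUpTo, HitsB, mem_ofPred_eq, not_exists, not_and]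
  exact ⟨fun h n hn => h n n hn le_rfl, fun h _ m hm _ => h m hm⟩

lemma antitone_avoidsUpTo (B : Set Ω) : Antitone (avoidsUpTo B) :=
  fun _ _ hab _ hω m hm hmb => hω m hm (hmb.trans hab)

variable [MeasurableSpace Ω]

lemma measurableSet_finAvoids (hB : MeasurableSet B) (n : ℕ) :
    MeasurableSet (finAvoids B n) := by
  simp only [finAvoids, ofPred_forall]
  exact .iInter fun i => .iInter fun _ => hB.compl.preimage (measurable_pi_apply i)

lemma measurableSet_avoidsUpTo (hB : MeasurableSet B) (n : ℕ) :
    MeasurableSet (avoidsUpTo B n) := by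
  rw [← preimage_finAvoids]
  exact measurable_pi_lambda _ (fun i => measurable_pi_apply _) (measurableSet_finAvoids hB n)

noncomputable def killedLaw (μ0 : Measure Ω) (ℓ : Kernel Ω Ω) (B : Set Ω) (n : ℕ) : Measure Ω :=
  ((fdd μ0 ℓ n).restrict (finAvoids B n)).map fun q => q (Fin.last n)

end Avoids

section KilledLaw

variable {Ω : Type*} [MeasurableSpace Ω] {μ0 : Measure Ω} {ℓ : Kernel Ω Ω} {B : Set Ω}

lemma killedLaw_zero : killedLaw μ0 ℓ B 0 = μ0 := by
  rw [killedLaw, finAvoids_zero, Measure.restrict_univ, fdd,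
    Measure.map_map (measurable_pi_apply _) (measurable_pi_lambda (fun x (_ : Fin 1) => x)
      fun _ => measurable_id)]
  exact Measure.map_id

lemma fdd_succ_avoids_edge [IsSFiniteKernel ℓ] (hB : MeasurableSet B) (n : ℕ)
    {E : Set (Ω × Ω)} (hE : MeasurableSet E) :
    fdd μ0 ℓ (n + 1) {p | Fin.init p ∈ finAvoids B n ∧
        (p (Fin.last n).castSucc, p (Fin.last (n + 1))) ∈ E} =
      ∫⁻ x, ℓ x (Prod.mk x ⁻¹' E) ∂killedLaw μ0 ℓ B n := by
  set S : Set ((Fin (n + 1) → Ω) × Ω) := {r | r.1 ∈ finAvoids B n ∧ (r.1 (Fin.last n), r.2) ∈ E}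
  have hS : MeasurableSet S := (measurable_fst (measurableSet_finAvoids hB n)).inter
    ((((measurable_pi_apply _).comp measurable_fst).prodMk measurable_snd) hE)
  refine (fdd_succ_apply μ0 ℓ n hS).trans ?_
  rw [killedLaw, lintegral_map (ℓ.measurable_kernel_prodMk_left hE) (measurable_pi_apply _),
    ← lintegral_indicator (measurableSet_finAvoids hB n)]
  refine lintegral_congr fun q => ?_
  by_cases hq : q ∈ finAvoids B n <;> simp [S, hq, Set.preimage]

lemma killedLaw_succ [IsSFiniteKernel ℓ] (hB : MeasurableSet B) (n : ℕ) :
    killedLaw μ0 ℓ B (n + 1) = (killedLaw μ0 ℓ B n).bind (ℓ.restrict hB.compl) := by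
  ext D hD
  rw [Measure.bind_apply hD (Kernel.aemeasurable _)]
  have hE : MeasurableSet (univ ×ˢ (D ∩ Bᶜ) : Set (Ω × Ω)) :=
    MeasurableSet.univ.prod (hD.inter hB.compl)
  refine Eq.trans ?_ ((fdd_succ_avoids_edge hB n hE).trans (lintegral_congr fun x => ?_))
  · rw [killedLaw, Measure.map_apply (measurable_pi_apply _) hD,
      Measure.restrict_apply (measurable_pi_apply _ hD)]
    congr 1
    ext q
    simp only [mem_inter_iff, mem_preimage, mem_finAvoids_succ, mem_ofPred_eq, mem_prod, mem_univ,
      mem_compl_iff, true_and]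
    tauto
  · rw [mk_preimage_prod_right (mem_univ x), Kernel.restrict_apply' _ _ _ hD]

end KilledLaw

namespace IsChainLaw

variable {Ω : Type*} [MeasurableSpace Ω] {μ0 : Measure Ω} {ℓ : Kernel Ω Ω} {B : Set Ω}
  {P : Measure (ℕ → Ω)}

lemma measurable_restrict_fin (n : ℕ) :
    Measurable fun (ω : ℕ → Ω) (i : Fin (n + 1)) => ω i :=
  measurable_pi_lambda _ fun _ => measurable_pi_apply _

lemma map_eval_zero (hP : IsChainLaw μ0 ℓ P) : P.map (fun ω => ω 0) = μ0 := by
  have h0 := congrArg (Measure.map fun q : Fin 1 → Ω => q 0) (hP.2 0)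
  rw [Measure.map_map (measurable_pi_apply _) (measurable_restrict_fin 0), fdd,
    Measure.map_map (measurable_pi_apply _) (measurable_pi_lambda (fun x (_ : Fin 1) => x)
      fun _ => measurable_id)] at h0
  exact h0.trans Measure.map_id

lemma ae_zero_mem (hP : IsChainLaw μ0 ℓ P) {A : Set Ω} (hA : ∀ᵐ x ∂μ0, x ∈ A) :
    ∀ᵐ ω ∂P, ω 0 ∈ A :=
  ae_of_ae_map (measurable_pi_apply 0).aemeasurable (hP.map_eval_zero ▸ hA)

lemma measure_avoidsUpTo (hP : IsChainLaw μ0 ℓ P) (hB : MeasurableSet B) (n : ℕ) :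
    P (avoidsUpTo B n) = killedLaw μ0 ℓ B n univ := by
  rw [← preimage_finAvoids, ← Measure.map_apply (measurable_restrict_fin n)
    (measurableSet_finAvoids hB n), hP.2 n, killedLaw,
    Measure.map_apply (measurable_pi_apply _) .univ, preimage_univ, Measure.restrict_apply_univ]

lemma measure_avoidsUpTo_edge [IsSFiniteKernel ℓ] (hP : IsChainLaw μ0 ℓ P)
    (hB : MeasurableSet B) (n : ℕ) {E : Set (Ω × Ω)} (hE : MeasurableSet E) :
    P (avoidsUpTo B n ∩ {ω | (ω n, ω (n + 1)) ∈ E}) =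
      ∫⁻ x, ℓ x (Prod.mk x ⁻¹' E) ∂killedLaw μ0 ℓ B n := by
  have hset : MeasurableSet {p : Fin (n + 2) → Ω | Fin.init p ∈ finAvoids B n ∧
      (p (Fin.last n).castSucc, p (Fin.last (n + 1))) ∈ E} :=
    (measurable_pi_lambda _ (fun i => measurable_pi_apply i.castSucc)
      (measurableSet_finAvoids hB n)).inter
      (((measurable_pi_apply _).prodMk (measurable_pi_apply _)) hE)
  rw [← fdd_succ_avoids_edge hB n hE, ← hP.2 (n + 1),
    Measure.map_apply (measurable_restrict_fin _) hset, ← preimage_finAvoids]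
  rfl

end IsChainLaw

section Flow

variable {Ω : Type*} [MeasurableSpace Ω] {Φ : Measure (Ω × Ω)} {ℓ : Kernel Ω Ω}
  {μ0 : Measure Ω} {A B : Set Ω} {P : Measure (ℕ → Ω)}

lemma Disintegrates.lintegral_kernel_apply (hdis : Disintegrates Φ ℓ) {E : Set (Ω × Ω)}
    (hE : MeasurableSet E) : ∫⁻ x, ℓ x (Prod.mk x ⁻¹' E) ∂Φ.fst = Φ E := by
  rw [← lintegral_indicator_one hE, hdis _ (measurable_one.indicator hE)]
  refine lintegral_congr fun x => ?_
  rw [← lintegral_indicator_one (measurable_prodMk_left hE)]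
  rfl

lemma Disintegrates.ae_kernel_eq_zero [IsSFiniteKernel ℓ] (hdis : Disintegrates Φ ℓ)
    {E : Set (Ω × Ω)} (hE : MeasurableSet E) (hΦE : Φ E = 0) :
    ∀ᵐ x ∂Φ.fst, ℓ x (Prod.mk x ⁻¹' E) = 0 :=
  (lintegral_eq_zero_iff (ℓ.measurable_kernel_prodMk_left hE)).1
    ((hdis.lintegral_kernel_apply hE).trans hΦE)

lemma MeasureTheory.Measure.snd_inter_compl_le_fst (hA : MeasurableSet A) (hB : MeasurableSet B)
    (hA0 : Φ.snd A = 0)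
    (hcons : ∀ C, MeasurableSet C → C ⊆ (A ∪ B)ᶜ → Φ.fst C = Φ.snd C)
    {D : Set Ω} (hD : MeasurableSet D) : Φ.snd (D ∩ Bᶜ) ≤ Φ.fst D :=
  calc Φ.snd (D ∩ Bᶜ) ≤ Φ.snd (D ∩ Bᶜ ∩ A) + Φ.snd (D ∩ Bᶜ ∩ Aᶜ) :=
        measure_le_inter_add_sdiff _ _ _
    _ = Φ.fst (D ∩ Bᶜ ∩ Aᶜ) := by
        rw [measure_mono_null inter_subset_right hA0, zero_add,
          hcons _ ((hD.inter hB.compl).inter hA.compl) fun x hx => by simp_all]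
    _ ≤ Φ.fst D := measure_mono (inter_subset_left.trans inter_subset_left)

lemma killedLaw_le_fst [IsSFiniteKernel ℓ] (hdis : Disintegrates Φ ℓ) (hB : MeasurableSet B)
    (h0 : μ0 ≤ Φ.fst) (hsub : ∀ D, MeasurableSet D → Φ.snd (D ∩ Bᶜ) ≤ Φ.fst D) :
    ∀ n, killedLaw μ0 ℓ B n ≤ Φ.fst
  | 0 => killedLaw_zero.trans_le h0
  | n + 1 => Measure.le_iff.2 fun D hD => by
    rw [killedLaw_succ hB, Measure.bind_apply hD (Kernel.aemeasurable _)]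
    calc ∫⁻ x, ℓ.restrict hB.compl x D ∂killedLaw μ0 ℓ B n
        ≤ ∫⁻ x, ℓ.restrict hB.compl x D ∂Φ.fst :=
          lintegral_mono' (killedLaw_le_fst hdis hB h0 hsub n) le_rfl
      _ = Φ.snd (D ∩ Bᶜ) := by
          rw [Measure.snd_apply (hD.inter hB.compl), ← univ_prod,
            ← hdis.lintegral_kernel_apply (MeasurableSet.univ.prod (hD.inter hB.compl))]
          simp_rw [Kernel.restrict_apply' _ _ _ hD, mk_preimage_prod_right (mem_univ _)]
      _ ≤ Φ.fst D := hsub D hD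

lemma IsChainLaw.ae_forall_edge [IsSFiniteKernel ℓ] (hP : IsChainLaw μ0 ℓ P)
    (hdis : Disintegrates Φ ℓ) (hB : MeasurableSet B) (hle : ∀ n, killedLaw μ0 ℓ B n ≤ Φ.fst)
    {Q : Ω × Ω → Prop} (hQ : ∀ᵐ p ∂Φ, Q p) :
    ∀ᵐ ω ∂P, ∀ n, ω ∈ avoidsUpTo B n → Q (ω n, ω (n + 1)) := by
  rw [ae_all_iff]
  intro n
  set N := toMeasurable Φ {p | ¬Q p}
  have hN : Φ N = 0 := by rw [measure_toMeasurable]; exact ae_iff.1 hQ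
  have hPN : P (avoidsUpTo B n ∩ {ω | (ω n, ω (n + 1)) ∈ N}) = 0 := by
    rw [hP.measure_avoidsUpTo_edge hB n (measurableSet_toMeasurable _ _)]
    exact le_antisymm ((lintegral_mono' (hle n) le_rfl).trans_eq
      ((hdis.lintegral_kernel_apply (measurableSet_toMeasurable _ _)).trans hN)) zero_le
  refine measure_mono_null (fun ω hω => ?_) hPN
  have hω : ω ∈ avoidsUpTo B n ∧ ¬Q (ω n, ω (n + 1)) := by simpa using hω
  exact ⟨hω.1, subset_toMeasurable _ _ hω.2⟩

end Flow

lemma tendsto_atTop_zero_of_add_le {e I : ℕ → ℝ≥0∞} (h : ∀ n, e (n + 1) + I n ≤ e n)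
    (h0 : e 0 ≠ ∞) : Tendsto I atTop (𝓝 0) := by
  have hsum : ∀ N, e N + ∑ n ∈ Finset.range N, I n ≤ e 0 := by
    intro N
    induction N with
    | zero => simp
    | succ N ih =>
      calc e (N + 1) + ∑ n ∈ Finset.range (N + 1), I n
          = (e (N + 1) + I N) + ∑ n ∈ Finset.range N, I n := by
            rw [Finset.sum_range_succ]; ring
        _ ≤ e 0 := (add_le_add_left (h N) _).trans ih
  refine ENNReal.tendsto_atTop_zero_of_tsum_ne_top (ne_top_of_le_ne_top h0 ?_)
  exact ENNReal.tsum_le_of_sum_range_le fun N => le_add_self.trans (hsum N)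

section Hitting

variable {Ω : Type*} [MeasurableSpace Ω]

lemma tendsto_measure_setOf_lt_nhdsGT_zero {ν : Measure Ω} [IsFiniteMeasure ν] {φ : Ω → ℝ≥0∞}
    (hφ : Measurable φ) (hpos : ∀ᵐ x ∂ν, φ x ≠ 0) :
    Tendsto (fun r => ν {x | φ x < r}) (𝓝[>] 0) (𝓝 0) := by
  have h := tendsto_measure_biInter_gt (μ := ν) (s := fun r => {x | φ x < r}) (a := 0)
    (fun r _ => (hφ measurableSet_Iio).nullMeasurableSet)
    (fun _ _ _ hij _ hx => lt_of_lt_of_le hx hij) ⟨1, one_pos, measure_ne_top _ _⟩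
  have hInter : (⋂ r > 0, {x | φ x < r}) = {x | ¬φ x ≠ 0} := by
    ext x
    simp only [mem_iInter, mem_ofPred_eq, not_not]
    exact ⟨fun hx => le_antisymm (le_of_forall_gt fun r hr => hx r hr) zero_le,
      fun hx r hr => hx ▸ hr⟩
  rwa [hInter, ae_iff.1 hpos] at h

lemma tendsto_measure_univ_zero_of_tendsto_lintegral {m : ℕ → Measure Ω} {ν : Measure Ω}
    [IsFiniteMeasure ν] (hle : ∀ n, m n ≤ ν) {φ : Ω → ℝ≥0∞} (hφ : Measurable φ)
    (hpos : ∀ᵐ x ∂ν, φ x ≠ 0)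
    (hI : Tendsto (fun n => ∫⁻ x, φ x ∂m n) atTop (𝓝 0)) :
    Tendsto (fun n => m n univ) atTop (𝓝 0) := by
  rw [ENNReal.tendsto_atTop_zero]
  intro ε hε
  have hε2 : ε / 2 ≠ 0 := (ENNReal.half_pos hε.ne').ne'
  obtain ⟨δ, hνδ, hδ⟩ := (((tendsto_measure_setOf_lt_nhdsGT_zero hφ hpos).eventually
    (gt_mem_nhds hε2.bot_lt)).and (Ioo_mem_nhdsGT zero_lt_one)).exists
  have hIδ : Tendsto (fun n => (∫⁻ x, φ x ∂m n) / δ) atTop (𝓝 0) := by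
    simpa using ENNReal.Tendsto.div_const hI (Or.inr hδ.1.ne')
  obtain ⟨N, hN⟩ := ENNReal.tendsto_atTop_zero.1 hIδ (ε / 2) hε2.bot_lt
  refine ⟨N, fun n hn => ?_⟩
  have hMarkov : m n {x | φ x < δ}ᶜ ≤ (∫⁻ x, φ x ∂m n) / δ := by
    simpa [compl_ofPred, not_lt] using
      meas_ge_le_lintegral_div hφ.aemeasurable hδ.1.ne' (hδ.2.trans ENNReal.one_lt_top).ne
  calc m n univ ≤ m n {x | φ x < δ} + m n {x | φ x < δ}ᶜ := measure_univ_le_add_compl _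
    _ ≤ ε / 2 + ε / 2 := add_le_add ((hle n _).trans hνδ.le) (hMarkov.trans (hN n hn))
    _ = ε := ENNReal.add_halves ε

theorem IsChainLaw.ae_hitsB {μ0 : Measure Ω} {ℓ : Kernel Ω Ω} [IsSFiniteKernel ℓ] {B : Set Ω}
    {P : Measure (ℕ → Ω)} (hP : IsChainLaw μ0 ℓ P) (hB : MeasurableSet B) {ν : Measure Ω}
    [IsFiniteMeasure ν] (hle : ∀ n, killedLaw μ0 ℓ B n ≤ ν) {u φ : Ω → ℝ≥0∞}
    (hu : Measurable u) (hφ : Measurable φ) (hu0 : ∫⁻ x, u x ∂μ0 ≠ ∞)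
    (hdrift : ∀ᵐ x ∂ν, ∫⁻ y, u y ∂ℓ x + φ x ≤ u x) (hpos : ∀ᵐ x ∂ν, φ x ≠ 0) :
    ∀ᵐ ω ∂P, HitsB B ω := by
  have := hP.1
  have hdec : ∀ n, ∫⁻ x, u x ∂killedLaw μ0 ℓ B (n + 1) + ∫⁻ x, φ x ∂killedLaw μ0 ℓ B n ≤
      ∫⁻ x, u x ∂killedLaw μ0 ℓ B n := fun n =>
    calc _ = ∫⁻ x, (∫⁻ y in Bᶜ, u y ∂ℓ x) ∂killedLaw μ0 ℓ B n
          + ∫⁻ x, φ x ∂killedLaw μ0 ℓ B n := by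
          rw [killedLaw_succ hB, Measure.lintegral_bind (Kernel.aemeasurable _) hu.aemeasurable]
          simp_rw [Kernel.restrict_apply]
      _ ≤ ∫⁻ x, (∫⁻ y, u y ∂ℓ x + φ x) ∂killedLaw μ0 ℓ B n := by
          rw [lintegral_add_right _ hφ]
          gcongr
          exact Measure.restrict_le_self
      _ ≤ ∫⁻ x, u x ∂killedLaw μ0 ℓ B n :=
          lintegral_mono_ae ((Measure.absolutelyContinuous_of_le (hle n)).ae_le hdrift)
  have hmass := tendsto_measure_univ_zero_of_tendsto_lintegral hle hφ hpos
    (tendsto_atTop_zero_of_add_le hdec (by rwa [killedLaw_zero]))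
  have hlim := tendsto_measure_iInter_atTop (μ := P)
    (fun n => (measurableSet_avoidsUpTo hB n).nullMeasurableSet) (antitone_avoidsUpTo B)
    ⟨0, measure_ne_top P _⟩
  rw [iInter_avoidsUpTo] at hlim
  rw [ae_iff]
  exact tendsto_nhds_unique hlim (hmass.congr fun n => (hP.measure_avoidsUpTo hB n).symm)

end Hitting

section Potential

variable {Ω : Type*} [MeasurableSpace Ω] {ρ : Measure Ω} {h : Ω → ℝ} {a : ℝ}

lemma lintegral_ofReal_add_lintegral_ofReal_sub [IsProbabilityMeasure ρ] (hh : Measurable h)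
    (h0 : ∀ y, 0 ≤ h y) (hlt : ∀ᵐ y ∂ρ, h y < a) :
    ∫⁻ y, ENNReal.ofReal (h y) ∂ρ + ∫⁻ y, ENNReal.ofReal (a - h y) ∂ρ = ENNReal.ofReal a := by
  rw [← lintegral_add_left hh.ennreal_ofReal]
  refine (lintegral_congr_ae (g := fun _ => ENNReal.ofReal a) (hlt.mono fun y hy => ?_)).trans
    (by simp)
  rw [← ENNReal.ofReal_add (h0 y) (sub_nonneg.2 hy.le), add_sub_cancel]

lemma lintegral_ofReal_sub_ne_zero [NeZero ρ] (hh : Measurable h) (hlt : ∀ᵐ y ∂ρ, h y < a) :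
    ∫⁻ y, ENNReal.ofReal (a - h y) ∂ρ ≠ 0 := by
  rw [Ne, lintegral_eq_zero_iff (f := fun y => ENNReal.ofReal (a - h y))
    (measurable_const.sub hh).ennreal_ofReal]
  intro hzero
  have hfalse : ∀ᵐ _ ∂ρ, False := (hzero.and hlt).mono fun y ⟨h1, h2⟩ => by
    simp only [Pi.zero_apply, ENNReal.ofReal_eq_zero, tsub_nonpos] at h1
    linarith
  exact NeZero.ne ρ (ae_eq_bot.1 (eventually_false_iff_eq_bot.1 hfalse))

end Potential

theorem IsChainLaw.ae_hitsB_of_potential {Ω : Type*} [MeasurableSpace Ω] {μ0 : Measure Ω}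
    {ℓ : Kernel Ω Ω} [IsMarkovKernel ℓ] {B : Set Ω} {P : Measure (ℕ → Ω)}
    (hP : IsChainLaw μ0 ℓ P) (hB : MeasurableSet B) {Φ : Measure (Ω × Ω)} [IsFiniteMeasure Φ]
    (hdis : Disintegrates Φ ℓ) (hle : ∀ n, killedLaw μ0 ℓ B n ≤ Φ.fst) {h : Ω → ℝ}
    (hh : Measurable h) (h01 : ∀ x, 0 ≤ h x ∧ h x ≤ 1) (hdec : ∀ᵐ p ∂Φ, h p.2 < h p.1) :
    ∀ᵐ ω ∂P, HitsB B ω := by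
  have hE : MeasurableSet {p : Ω × Ω | ¬h p.2 < h p.1} :=
    (measurableSet_lt (hh.comp measurable_snd) (hh.comp measurable_fst)).compl
  have hkernel : ∀ᵐ x ∂Φ.fst, ∀ᵐ y ∂ℓ x, h y < h x :=
    (hdis.ae_kernel_eq_zero hE (ae_iff.1 hdec)).mono fun x hx => ae_iff.2 hx
  have hu0 : ∫⁻ x, ENNReal.ofReal (h x) ∂μ0 ≠ ∞ := by
    refine ne_top_of_le_ne_top (measure_ne_top (Φ.fst) univ) ?_
    calc ∫⁻ x, ENNReal.ofReal (h x) ∂μ0 ≤ ∫⁻ _, 1 ∂μ0 :=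
          lintegral_mono fun x => ENNReal.ofReal_le_one.2 (h01 x).2
      _ ≤ Φ.fst univ := by
          rw [lintegral_one, ← killedLaw_zero (μ0 := μ0) (ℓ := ℓ) (B := B)]
          exact hle 0 _
  refine hP.ae_hitsB hB hle hh.ennreal_ofReal
    (Measurable.lintegral_kernel_prod_right (κ := ℓ) (f := fun x y => ENNReal.ofReal (h x - h y))
      (measurable_ofReal_sub hh)) hu0 ?_ ?_
  · filter_upwards [hkernel] with x hx
    exact (lintegral_ofReal_add_lintegral_ofReal_sub hh (fun y => (h01 y).1) hx).le
  · filter_upwards [hkernel] with x hx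
    exact lintegral_ofReal_sub_ne_zero hh hx

section Paths

lemma sum_range_ofReal_sub {f : ℕ → ℝ} {t : ℕ} (hf : ∀ n < t, f (n + 1) ≤ f n) :
    ∑ n ∈ Finset.range t, ENNReal.ofReal (f n - f (n + 1)) = ENNReal.ofReal (f 0 - f t) := by
  rw [← ENNReal.ofReal_sum_of_nonneg fun n hn => sub_nonneg.2 (hf n (Finset.mem_range.1 hn)),
    Finset.sum_range_sub']

variable {Ω : Type*} {B : Set Ω} {ω : ℕ → Ω}

lemma HitsB.exists_first (hω : HitsB B ω) :
    ∃ t, 1 ≤ t ∧ ω t ∈ B ∧ ∀ m, 1 ≤ m → m < t → ω m ∉ B := by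
  classical
  exact ⟨Nat.find hω, (Nat.find_spec hω).1, (Nat.find_spec hω).2,
    fun m h1 hm hmB => Nat.find_min hω hm ⟨h1, hmB⟩⟩

lemma stoppedSum_eq_sum_range (g : Ω × Ω → ℝ≥0∞) {t : ℕ} (ht1 : 1 ≤ t) (htB : ω t ∈ B)
    (hbefore : ∀ m, 1 ≤ m → m < t → ω m ∉ B) :
    stoppedSum B g ω = ∑ n ∈ Finset.range t, g (ω n, ω (n + 1)) := by
  have hcond : ∀ n, (∀ m, 1 ≤ m → m ≤ n → ω m ∉ B) ↔ n < t := fun n =>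
    ⟨fun h => lt_of_not_ge fun hn => h t ht1 hn htB,
      fun hn m h1 hm => hbefore m h1 (hm.trans_lt hn)⟩
  simp_rw [stoppedSum, hcond]
  exact (tsum_eq_sum fun n hn => if_neg (by simpa using hn)).trans
    (Finset.sum_congr rfl fun n hn => if_pos (Finset.mem_range.1 hn))

lemma stoppedSum_eq_of_forall_avoidsUpTo {g : Ω × Ω → ℝ≥0∞} {c : ℝ≥0∞} {h : Ω → ℝ}
    (hω : HitsB B ω) (h0 : h (ω 0) = 1) (hB : ∀ x ∈ B, h x = 0)
    (hstep : ∀ n, ω ∈ avoidsUpTo B n →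
      g (ω n, ω (n + 1)) = c⁻¹ * ENNReal.ofReal (h (ω n) - h (ω (n + 1))) ∧
        h (ω (n + 1)) < h (ω n)) :
    stoppedSum B g ω = c⁻¹ := by
  obtain ⟨t, ht1, htB, hbefore⟩ := hω.exists_first
  have hstep' (n : ℕ) (hn : n < t) := hstep n fun m h1 hm => hbefore m h1 (hm.trans_lt hn)
  rw [stoppedSum_eq_sum_range g ht1 htB hbefore,
    Finset.sum_congr rfl fun n hn => (hstep' n (Finset.mem_range.1 hn)).1, ← Finset.mul_sum,
    sum_range_ofReal_sub fun n hn => (hstep' n hn).2.le, h0, hB _ htB]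
  simp

lemma ne_of_forall_avoidsUpTo {β : Type*} [Preorder β] {f : Ω → β}
    (hdec : ∀ n, ω ∈ avoidsUpTo B n → f (ω (n + 1)) < f (ω n)) {i j : ℕ} (hij : i < j)
    (hj : ∀ m, 1 ≤ m → m < j → ω m ∉ B) : ω i ≠ ω j := fun heq => by
  have hanti : StrictAntiOn (f ∘ ω) (Iic j) := strictAntiOn_Iic_of_succ_lt fun n hn => by
    simpa using hdec n fun m h1 hm => hj m h1 (hm.trans_lt hn)
  exact (hanti (mem_Iic.2 hij.le) (mem_Iic.2 le_rfl) hij).ne (by simp [heq])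

end Paths

theorem harmonicFlow_optimal_general
    {Ω : Type*} [MeasurableSpace Ω]
    (k : Kernel Ω Ω) (hk : ∀ x, k x univ < ⊤)
    (μ : Measure Ω) [SigmaFinite μ]
    (K : Measure (Ω × Ω)) [IsFiniteMeasure K]
    (hKrep : ∀ C D : Set Ω, MeasurableSet C → MeasurableSet D →
      K (C ×ˢ D) = ∫⁻ x in C, k x D ∂μ)
    (hKsym : ∀ C D : Set Ω, MeasurableSet C → MeasurableSet D → K (C ×ˢ D) = K (D ×ˢ C))
    (A B : Set Ω) (hA : MeasurableSet A) (hB : MeasurableSet B)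
    (hCap : 0 < Cap A B K)
    (hAB : Ω → ℝ) (hABmem : hAB ∈ VAB A B K)
    (hABharm : ∀ᵐ x ∂(μ.restrict ((A ∪ B)ᶜ)), negL k hAB x = 0)
    (ℓ : Kernel Ω Ω) (hℓ : IsMarkovKernel ℓ)
    (hdis : Disintegrates (harmonicFlow K (Cap A B K) hAB) ℓ)
    (P : Measure (ℕ → Ω))
    (hP : IsChainLaw ((harmonicFlow K (Cap A B K) hAB).fst.restrict A) ℓ P) :
    (∀ᵐ ω ∂P, HitsB B ω) ∧
    (∀ᵐ ω ∂P, ∀ i j : ℕ, i < j → (∀ m : ℕ, 1 ≤ m → m < j → ω m ∉ B) → ω i ≠ ω j) ∧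
    bkValue B ((harmonicFlow K (Cap A B K) hAB).rnDeriv K) P = Cap A B K := by
  obtain ⟨hmeas, hA1, hB0, h01, -⟩ := hABmem
  have := k.isSFiniteKernel_of_forall_lt_top hk
  have := hP.1
  set Φ := harmonicFlow K (Cap A B K) hAB
  have : IsFiniteMeasure Φ := isFiniteMeasure_harmonicFlow hCap.ne' h01
  have hcons (C : Set Ω) (hC : MeasurableSet C) (hCAB : C ⊆ (A ∪ B)ᶜ) : Φ.fst C = Φ.snd C :=
    harmonicFlow_fst_eq_snd hk (Measure.eq_compProd_of_apply_prod hKrep)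
      (Measure.map_swap_eq_self_of_apply_prod hKsym) hmeas h01 hC
      (ae_restrict_of_ae_restrict_of_subset hCAB hABharm)
  have hA0 : Φ.snd A = 0 := harmonicFlow_snd_eq_zero hmeas (fun x => (h01 x).2) hA hA1
  have hle := killedLaw_le_fst hdis hB (Measure.restrict_le_self (s := A)) fun D hD =>
    Measure.snd_inter_compl_le_fst hA hB hA0 hcons hD
  have hgood := hP.ae_forall_edge hdis hB hle
    ((ae_rnDeriv_harmonicFlow hmeas).and (ae_harmonicFlow_lt hmeas))
  have hhit := hP.ae_hitsB_of_potential hB hdis hle hmeas h01 (ae_harmonicFlow_lt hmeas)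
  refine ⟨hhit, ?_, ?_⟩
  · filter_upwards [hgood] with ω hω i j hij hj
    exact ne_of_forall_avoidsUpTo (fun n hn => (hω n hn).2) hij hj
  · rw [bkValue, lintegral_congr_ae (g := fun _ => Cap A B K) ?_, lintegral_const, measure_univ,
      mul_one]
    filter_upwards [hhit, hgood, hP.ae_zero_mem (ae_restrict_mem hA)] with ω hω hgω h0
    rw [if_pos hω, stoppedSum_eq_of_forall_avoidsUpTo hω (hA1 _ h0) hB0 hgω, inv_inv]

/-- **Optimality of the harmonic flow: the associated chain hits `B` almost surely, its stopped
paths are self-avoiding, and it attains equality in the Berman-Konsowa bound.** -/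
theorem harmonicFlow_optimal
    {Ω : Type*} [MeasurableSpace Ω] [TopologicalSpace Ω] [PolishSpace Ω] [BorelSpace Ω]
    (k : Kernel Ω Ω) (hk : ∀ x, k x univ < ⊤)
    (μ : Measure Ω) [SigmaFinite μ]
    (K : Measure (Ω × Ω)) [IsFiniteMeasure K] (hK0 : K ≠ 0)
    (hKrep : ∀ C D : Set Ω, MeasurableSet C → MeasurableSet D →
      K (C ×ˢ D) = ∫⁻ x in C, k x D ∂μ)
    (hKsym : ∀ C D : Set Ω, MeasurableSet C → MeasurableSet D → K (C ×ˢ D) = K (D ×ˢ C))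
    (A B : Set Ω) (hA : MeasurableSet A) (hB : MeasurableSet B) (hd : Disjoint A B)
    (hμA : 0 < μ A) (hμB : 0 < μ B)
    (hne : (VAB A B K).Nonempty) (hCap : 0 < Cap A B K)
    (hAB : Ω → ℝ) (hABmem : hAB ∈ VAB A B K) (hABmin : dirichletForm K hAB = Cap A B K)
    (hABharm : ∀ᵐ x ∂(μ.restrict ((A ∪ B)ᶜ)), negL k hAB x = 0)
    (hABcharge : ∫ x in A, negL k hAB x ∂μ = (Cap A B K).toReal)
    (ℓ : Kernel Ω Ω) (hℓ : IsMarkovKernel ℓ)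
    (hdis : Disintegrates (harmonicFlow K (Cap A B K) hAB) ℓ)
    (P : Measure (ℕ → Ω))
    (hP : IsChainLaw ((harmonicFlow K (Cap A B K) hAB).fst.restrict A) ℓ P) :
    (∀ᵐ ω ∂P, HitsB B ω) ∧
    (∀ᵐ ω ∂P, ∀ i j : ℕ, i < j → (∀ m : ℕ, 1 ≤ m → m < j → ω m ∉ B) → ω i ≠ ω j) ∧
    bkValue B ((harmonicFlow K (Cap A B K) hAB).rnDeriv K) P = Cap A B K :=
  harmonicFlow_optimal_general k hk μ K hKrep hKsym A B hA hB hCap hAB hABmem hABharm ℓ hℓ hdis P hP
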